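/- arXiv:1202.4969 — 2 statements merged into one kernel-verified Lean document; each statement's English description precedes it below -/
import Mathlib

section
/- For every ρ ≥ 1 and all t, s ≥ 0, the truncated Oseen vortex satisfies ‖u^χ(·,t) − u^χ(·,s)‖²_{L²(ℝ²)} ≤ (1/(4π)) |log((1+t)/(1+s))|. -/
open MeasureTheory Filter
open scoped Classical

noncomputable section

abbrev E2 := EuclideanSpace ℝ (Fin 2)

/-- The vector `(a, b)` in `ℝ²` (with the Euclidean norm). -/
def vec2 (a b : ℝ) : E2 := (WithLp.equiv 2 (Fin 2 → ℝ)).symm ![a, b]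

/-- `x^⊥ = (-x₂, x₁)`. -/
def perp (x : E2) : E2 := vec2 (-(x 1)) (x 0)

/-- The Oseen vortex velocity field. -/
def theta (t : ℝ) (x : E2) : E2 :=
  if x = 0 then 0 else
    ((1 - Real.exp (-(‖x‖ ^ 2) / (4 * (1 + t)))) / (2 * Real.pi * ‖x‖ ^ 2)) • perp x

/-- The Oseen vorticity (Gaussian). -/
def Xi (t : ℝ) (x : E2) : ℝ :=
  (1 / (4 * Real.pi * (1 + t))) * Real.exp (-(‖x‖ ^ 2) / (4 * (1 + t)))

/-- The `i`-th standard basis vector of `ℝ²`. -/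
def e2 (i : Fin 2) : E2 := EuclideanSpace.single i 1

/-- The truncated Oseen vortex `u^χ(x,t) = χ̃(x/ρ) Θ(x,t)`. -/
def uchi (χt : E2 → ℝ) (ρ t : ℝ) (x : E2) : E2 := χt (ρ⁻¹ • x) • theta t x


lemma norm_perp (x : E2) : ‖perp x‖ = ‖x‖ := by
  simp [perp, vec2, EuclideanSpace.norm_eq, Fin.sum_univ_two, add_comm]

lemma continuous_perp : Continuous perp := by
  unfold perp vec2
  refine (PiLp.continuous_toLp 2 (fun _ : Fin 2 => ℝ)).comp ?_
  refine continuous_pi fun i => ?_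
  fin_cases i <;> simp <;> fun_prop

lemma gauss_int (c : ℝ) (hc : 0 < c) : ∫ x : E2, Real.exp (-c * ‖x‖^2) = Real.pi / c := by
  rw [GaussianFourier.integral_rexp_neg_mul_sq_norm hc]
  simp [finrank_euclideanSpace_fin]

lemma gauss_integrable (c : ℝ) (hc : 0 < c) :
    Integrable (fun x : E2 => Real.exp (-c * ‖x‖^2)) := by
  have h := (GaussianFourier.integrable_cexp_neg_mul_sq_norm_add
    (V := E2) (b := (c : ℂ)) (by simpa using hc) 0 0).norm
  convert h using 2 with x
  simp [Complex.norm_exp, ← Complex.ofReal_pow]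

lemma gauss_lintegral (c : ℝ) (hc : 0 < c) :
    ∫⁻ x : E2, ENNReal.ofReal (Real.exp (-c * ‖x‖^2)) = ENNReal.ofReal (Real.pi / c) := by
  rw [← ofReal_integral_eq_lintegral_ofReal (gauss_integrable c hc)
    (Filter.Eventually.of_forall fun x => (Real.exp_pos _).le), gauss_int c hc]

lemma exp_interval_integral (k : ℝ) (hk : k ≠ 0) (α β : ℝ) :
    ∫ c in α..β, Real.exp (-c*k) = (Real.exp (-α*k) - Real.exp (-β*k))/k := by
  have hd : ∀ c ∈ Set.uIcc α β,
      HasDerivAt (fun c => -(Real.exp (-(c*k))/k)) (Real.exp (-c*k)) c := by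
    intro c _
    have h1 : HasDerivAt (fun c : ℝ => -(c*k)) (-k) c := by
      exact (hasDerivAt_mul_const k).neg
    have h2 : HasDerivAt (fun c => -(Real.exp (-(c*k))/k)) (-(Real.exp (-(c * k)) * -k / k)) c :=
      (h1.exp.div_const k).neg
    convert h2 using 1
    field_simp
  rw [intervalIntegral.integral_eq_sub_of_hasDerivAt hd
    ((Real.continuous_exp.comp (by fun_prop)).intervalIntegrable α β)]
  ring

lemma slice1 (α β k : ℝ) (hαβ : α ≤ β) (hk : 0 < k) :
    ∫⁻ c in Set.Ioc α β, ENNReal.ofReal (Real.exp (-c*k))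
      = ENNReal.ofReal ((Real.exp (-α*k) - Real.exp (-β*k))/k) := by
  rw [← ofReal_integral_eq_lintegral_ofReal
    ((by fun_prop : Continuous fun c : ℝ => Real.exp (-c*k)).integrableOn_Ioc)
    (Filter.Eventually.of_forall fun c => (Real.exp_pos _).le)]
  congr 1
  rw [← intervalIntegral.integral_of_le hαβ, exp_interval_integral k hk.ne']

lemma slice2 (α β : ℝ) (hα : 0 < α) (hαβ : α ≤ β) :
    ∫⁻ c in Set.Ioc α β, ENNReal.ofReal (Real.pi / c)
      = ENNReal.ofReal (Real.pi * Real.log (β/α)) := by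
  have hβ : 0 < β := lt_of_lt_of_le hα hαβ
  have hint : IntegrableOn (fun c : ℝ => Real.pi / c) (Set.Ioc α β) := by
    apply (ContinuousOn.integrableOn_compact isCompact_Icc ?_).mono_set Set.Ioc_subset_Icc_self
    exact continuousOn_const.div continuousOn_id
      (fun c hc => (lt_of_lt_of_le hα hc.1).ne')
  rw [← ofReal_integral_eq_lintegral_ofReal hint
    ((ae_restrict_iff' measurableSet_Ioc).2 (Filter.Eventually.of_forall
      fun c hc => div_nonneg Real.pi_pos.le (hα.trans hc.1).le))]
  congr 1
  rw [← intervalIntegral.integral_of_le hαβ]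
  simp_rw [div_eq_mul_inv]
  rw [intervalIntegral.integral_const_mul, integral_inv
    (Set.notMem_uIcc_of_lt hα hβ), ← div_eq_mul_inv]

lemma key_lintegral (α β : ℝ) (hα : 0 < α) (hαβ : α ≤ β) :
    ∫⁻ x : E2, ENNReal.ofReal (if x = 0 then 0 else
        (Real.exp (-α*‖x‖^2) - Real.exp (-β*‖x‖^2))/‖x‖^2)
      = ENNReal.ofReal (Real.pi * Real.log (β/α)) := by
  have h0 : ∀ᵐ x : E2, x ≠ (0 : E2) := by
    rw [ae_iff]
    simpa using measure_singleton (0 : E2)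
  have step1 : ∫⁻ x : E2, ENNReal.ofReal (if x = 0 then 0 else
        (Real.exp (-α*‖x‖^2) - Real.exp (-β*‖x‖^2))/‖x‖^2)
      = ∫⁻ x : E2, ∫⁻ c in Set.Ioc α β, ENNReal.ofReal (Real.exp (-c*‖x‖^2)) := by
    refine lintegral_congr_ae (h0.mono fun x hx => ?_)
    simp only [if_neg hx]
    exact (slice1 α β _ hαβ (pow_pos (norm_pos_iff.mpr hx) 2)).symm
  rw [step1, lintegral_lintegral_swap]
  · rw [← slice2 α β hα hαβ]
    refine setLIntegral_congr_fun measurableSet_Ioc (fun c hc => ?_)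
    exact gauss_lintegral c (hα.trans hc.1)
  · apply Measurable.aemeasurable
    exact ENNReal.measurable_ofReal.comp (by fun_prop)


lemma measurable_theta (t : ℝ) : Measurable (theta t) := by
  unfold theta
  refine Measurable.ite (MeasurableSet.singleton 0) measurable_const ?_
  · exact Measurable.smul (f := fun x : E2 => (1 - Real.exp (-(‖x‖ ^ 2) / (4 * (1 + t)))) / (2 * Real.pi * ‖x‖ ^ 2)) (by fun_prop) continuous_perp.measurable

lemma theta_sub (t s : ℝ) (x : E2) (hx : x ≠ 0) :
    theta t x - theta s x
      = ((Real.exp (-(‖x‖^2)/(4*(1+s))) - Real.exp (-(‖x‖^2)/(4*(1+t))))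
          / (2*Real.pi*‖x‖^2)) • perp x := by
  unfold theta
  rw [if_neg hx, if_neg hx, ← sub_smul]
  congr 1
  ring


lemma main_aux (χt : E2 → ℝ) (hχc : Continuous χt)
    (hχ_range : ∀ x : E2, χt x ∈ Set.Icc (0 : ℝ) 1)
    (ρ : ℝ) (t s : ℝ) (ht : 0 ≤ t) (hs : 0 ≤ s) (hst : s ≤ t) :
    ∫ x : E2, ‖uchi χt ρ t x - uchi χt ρ s x‖ ^ 2
      ≤ (1 / (4 * Real.pi)) * |Real.log ((1 + t) / (1 + s))| := by
  set A : ℝ := 1 + s with hA_def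
  set B : ℝ := 1 + t with hB_def
  have hA : (0:ℝ) < A := by positivity
  have hB : (0:ℝ) < B := by positivity
  have hAB : A ≤ B := by simp [hA_def, hB_def, hst]
  set α : ℝ := (4*B)⁻¹ with hα_def
  set β : ℝ := (4*A)⁻¹ with hβ_def
  have hα : 0 < α := by positivity
  have hαβ : α ≤ β := by
    apply inv_anti₀ (by positivity)
    linarith
  have hβα : β / α = B / A := by
    rw [hα_def, hβ_def]
    field_simp
  -- pointwise bound
  have hbd : ∀ x : E2, ‖uchi χt ρ t x - uchi χt ρ s x‖ ^ 2
      ≤ (4*Real.pi^2)⁻¹ * (if x = 0 then 0 else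
        (Real.exp (-α*‖x‖^2) - Real.exp (-β*‖x‖^2))/‖x‖^2) := by
    intro x
    by_cases hx : x = 0
    · simp [hx, uchi, theta]
    · rw [if_neg hx]
      set r2 : ℝ := ‖x‖^2 with hr2_def
      have hr2 : 0 < r2 := pow_pos (norm_pos_iff.mpr hx) 2
      set a : ℝ := Real.exp (-α*r2) with ha_def
      set b : ℝ := Real.exp (-β*r2) with hb_def
      have ha1 : a ≤ 1 := Real.exp_le_one_iff.mpr (by nlinarith)
      have hb0 : 0 < b := Real.exp_pos _
      have hba : b ≤ a := Real.exp_le_exp.mpr (by nlinarith)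
      have hθ : theta t x - theta s x = ((b - a) / (2*Real.pi*r2)) • perp x := by
        rw [theta_sub t s x hx]
        congr 3
        · rw [hb_def]; congr 1; rw [hβ_def]; field_simp; rw [hA_def, hr2_def]; ring
        · rw [ha_def]; congr 1; rw [hα_def]; field_simp; rw [hB_def, hr2_def]; ring
      have hd : uchi χt ρ t x - uchi χt ρ s x
          = χt (ρ⁻¹ • x) • (theta t x - theta s x) := by
        rw [smul_sub]; rfl
      have hn : ‖uchi χt ρ t x - uchi χt ρ s x‖
          ≤ (a - b) / (2*Real.pi*r2) * ‖x‖ := by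
        rw [hd, hθ, norm_smul, norm_smul, norm_perp, Real.norm_eq_abs, Real.norm_eq_abs]
        have h1 : |χt (ρ⁻¹ • x)| ≤ 1 := by
          rcases hχ_range (ρ⁻¹ • x) with ⟨h0, h1⟩
          rw [abs_of_nonneg h0]; exact h1
        have h2 : |(b - a) / (2*Real.pi*r2)| = (a - b) / (2*Real.pi*r2) := by
          rw [abs_div, abs_of_nonpos (by linarith), abs_of_pos (by positivity)]
          ring_nf
        calc |χt (ρ⁻¹ • x)| * (|(b - a) / (2*Real.pi*r2)| * ‖x‖)
            ≤ 1 * (|(b - a) / (2*Real.pi*r2)| * ‖x‖) := by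
              apply mul_le_mul_of_nonneg_right h1 (by positivity)
          _ = (a - b) / (2*Real.pi*r2) * ‖x‖ := by rw [h2]; ring
      have hsq : ((a - b) / (2*Real.pi*r2) * ‖x‖)^2 = (a-b)^2 / (4*Real.pi^2*r2) := by
        have hx2 : ‖x‖^2 = r2 := rfl
        rw [mul_pow, hx2]
        field_simp
        ring
      calc ‖uchi χt ρ t x - uchi χt ρ s x‖ ^ 2
          ≤ ((a - b) / (2*Real.pi*r2) * ‖x‖)^2 := by
            apply pow_le_pow_left₀ (norm_nonneg _) hn
        _ = (a-b)^2 / (4*Real.pi^2*r2) := hsq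
        _ ≤ (a-b) / (4*Real.pi^2*r2) := by
            gcongr
            exact pow_le_of_le_one (by linarith) (by linarith) two_ne_zero
        _ = (4*Real.pi^2)⁻¹ * ((a - b)/r2) := by ring
  have hm : Measurable fun x : E2 => uchi χt ρ t x - uchi χt ρ s x := by
    apply Measurable.sub <;>
      exact ((hχc.comp (continuous_const_smul ρ⁻¹)).measurable).smul (measurable_theta _)
  have hmeas : AEStronglyMeasurable
      (fun x : E2 => ‖uchi χt ρ t x - uchi χt ρ s x‖^2) volume :=
    (hm.norm.pow_const 2).aestronglyMeasurable
  have hnn : 0 ≤ᵐ[volume] fun x : E2 => ‖uchi χt ρ t x - uchi χt ρ s x‖^2 :=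
    Filter.Eventually.of_forall fun x => by positivity
  rw [integral_eq_lintegral_of_nonneg_ae hnn hmeas]
  have hle : ∫⁻ x : E2, ENNReal.ofReal (‖uchi χt ρ t x - uchi χt ρ s x‖^2)
      ≤ ENNReal.ofReal ((4*Real.pi^2)⁻¹) * ENNReal.ofReal (Real.pi * Real.log (β/α)) := by
    rw [← key_lintegral α β hα hαβ, ← lintegral_const_mul' _ _ ENNReal.ofReal_ne_top]
    apply lintegral_mono
    intro x
    dsimp only
    rw [← ENNReal.ofReal_mul (by positivity)]
    exact ENNReal.ofReal_le_ofReal (hbd x)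
  have hlog : 0 ≤ Real.log (β/α) := by
    apply Real.log_nonneg
    rw [hβα]
    exact (one_le_div hA).2 hAB
  refine le_trans (ENNReal.toReal_mono (by finiteness) hle) ?_
  rw [ENNReal.toReal_mul, ENNReal.toReal_ofReal (by positivity),
    ENNReal.toReal_ofReal (by positivity)]
  rw [hβα] at hlog ⊢
  rw [abs_of_nonneg hlog]
  apply le_of_eq
  have hπ : Real.pi ≠ 0 := Real.pi_ne_zero
  field_simp


theorem truncated_oseen_L2_difference
    (χt : E2 → ℝ) (hχ_smooth : ContDiff ℝ (⊤ : ℕ∞) χt)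
    (hχ_radial : ∀ x y : E2, ‖x‖ = ‖y‖ → χt x = χt y)
    (hχ_zero : ∀ x : E2, ‖x‖ ≤ 1 → χt x = 0)
    (hχ_one : ∀ x : E2, 2 ≤ ‖x‖ → χt x = 1)
    (hχ_range : ∀ x : E2, χt x ∈ Set.Icc (0 : ℝ) 1)
    (ρ : ℝ) (hρ : 1 ≤ ρ) (t s : ℝ) (ht : 0 ≤ t) (hs : 0 ≤ s) :
    ∫ x : E2, ‖uchi χt ρ t x - uchi χt ρ s x‖ ^ 2
      ≤ (1 / (4 * Real.pi)) * |Real.log ((1 + t) / (1 + s))| := by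
  rcases le_total s t with h | h
  · exact main_aux χt hχ_smooth.continuous hχ_range ρ t s ht hs h
  · have H := main_aux χt hχ_smooth.continuous hχ_range ρ s t hs ht h
    calc ∫ x : E2, ‖uchi χt ρ t x - uchi χt ρ s x‖ ^ 2
        = ∫ x : E2, ‖uchi χt ρ s x - uchi χt ρ t x‖ ^ 2 := by
          simp_rw [norm_sub_rev]
      _ ≤ (1 / (4 * Real.pi)) * |Real.log ((1 + s) / (1 + t))| := H
      _ = (1 / (4 * Real.pi)) * |Real.log ((1 + t) / (1 + s))| := by
          rw [show (1+s)/(1+t) = ((1+t)/(1+s))⁻¹ by rw [inv_div], Real.log_inv, abs_neg]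
end
end

section
/- Define the remainder R^χ = Δu^χ − ∂_t u^χ. Then for every ρ ≥ 1, every t ≥ 0, and every x ≠ 0, R^χ(x,t) = Θ(x,t) Δχ(x) + 2 ((x·∇χ(x))/|x|²) ( x^⊥ Ξ(x,t) − Θ(x,t) ), where Ξ(x,t) = (1/(4π(1+t))) exp(−|x|²/(4(1+t))). In particular R^χ(·,t) vanishes outside the annulus D = {x ∈ ℝ² : ρ ≤ |x| ≤ 2ρ}, and there is a constant C > 0 depending only on the profile χ̃ such that |R^χ(x,t)| ≤ C ρ^{−1} (1+t)^{−1} for all x ∈ ℝ² and t ≥ 0. -/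
open MeasureTheory Filter
open scoped Classical
open scoped Topology

noncomputable section

/-- The remainder `R^χ = Δu^χ - ∂ₜu^χ` of the truncated Oseen vortex,
computed componentwise (Laplacian in `x` minus time derivative). -/
def Rchi (χt : E2 → ℝ) (ρ t : ℝ) (x : E2) : E2 :=
  vec2
    ((∑ j : Fin 2, fderiv ℝ (fun y => fderiv ℝ (fun z => uchi χt ρ t z 0) y (e2 j)) x (e2 j))
      - deriv (fun s => uchi χt ρ s x 0) t)
    ((∑ j : Fin 2, fderiv ℝ (fun y => fderiv ℝ (fun z => uchi χt ρ t z 1) y (e2 j)) x (e2 j))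
      - deriv (fun s => uchi χt ρ s x 1) t)


def gg (t s : ℝ) : ℝ := (1 - Real.exp ((-s) / (4*(1+t)))) / (2*Real.pi*s)
def gg1 (t s : ℝ) : ℝ := Real.exp ((-s)/(4*(1+t))) / (8*Real.pi*(1+t)*s)
  - (1 - Real.exp ((-s)/(4*(1+t))))/(2*Real.pi*s^2)
def gg2 (t s : ℝ) : ℝ := -(Real.exp ((-s)/(4*(1+t)))/(32*Real.pi*(1+t)^2*s))
  - Real.exp ((-s)/(4*(1+t)))/(4*Real.pi*(1+t)*s^2)
  + (1-Real.exp ((-s)/(4*(1+t))))/(Real.pi*s^3)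

lemma hasDerivAt_exparg (t s : ℝ) :
    HasDerivAt (fun u : ℝ => (-u) / (4*(1+t))) (-1 / (4*(1+t))) s :=
  ((hasDerivAt_id s).neg.div_const (4*(1+t)))

lemma hasDerivAt_gg (t s : ℝ) (ht : (1:ℝ)+t ≠ 0) (hs : s ≠ 0) :
    HasDerivAt (gg t) (gg1 t s) s := by
  have hπ := Real.pi_ne_zero
  have h1 := ((hasDerivAt_exparg t s).exp).const_sub 1
  have h2 : HasDerivAt (fun u : ℝ => 2*Real.pi*u) (2*Real.pi) s := by
    simpa using (hasDerivAt_id s).const_mul (2*Real.pi)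
  have h3 := h1.div h2 (by simp [hπ, hs])
  refine h3.congr_deriv ?_
  unfold gg1
  field_simp
  ring

lemma hasDerivAt_gg1 (t s : ℝ) (ht : (1:ℝ)+t ≠ 0) (hs : s ≠ 0) :
    HasDerivAt (gg1 t) (gg2 t s) s := by
  have hπ := Real.pi_ne_zero
  have he := (hasDerivAt_exparg t s).exp
  have h2 : HasDerivAt (fun u : ℝ => 8*Real.pi*(1+t)*u) (8*Real.pi*(1+t)) s := by
    simpa using (hasDerivAt_id s).const_mul (8*Real.pi*(1+t))
  have hA := he.div h2 (by simp [hπ, hs, ht])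
  have h4 : HasDerivAt (fun u : ℝ => 2*Real.pi*u^2) (2*Real.pi*(2*s)) s := by
    simpa [mul_assoc] using ((hasDerivAt_pow 2 s)).const_mul (2*Real.pi)
  have hB := (he.const_sub 1).div h4 (by simp [hπ, hs])
  have h5 := hA.sub hB
  refine h5.congr_deriv ?_
  unfold gg2
  field_simp
  ring

lemma heat_id (t s : ℝ) (ht : (1:ℝ)+t ≠ 0) (hs : s ≠ 0) :
    4*s*gg2 t s + 8*gg1 t s = -(Real.exp ((-s)/(4*(1+t)))/(8*Real.pi*(1+t)^2)) := by
  have hπ := Real.pi_ne_zero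
  unfold gg1 gg2
  field_simp
  ring

lemma radial_id (t s : ℝ) (ht : (1:ℝ)+t ≠ 0) (hs : s ≠ 0) :
    gg t s + 2*s*gg1 t s = Real.exp ((-s)/(4*(1+t)))/(4*Real.pi*(1+t)) - gg t s := by
  have hπ := Real.pi_ne_zero
  unfold gg gg1
  field_simp
  ring

lemma hasDerivAt_gg_time (t s : ℝ) (ht : (1:ℝ)+t ≠ 0) (hs : s ≠ 0) :
    HasDerivAt (fun u => gg u s) (-(Real.exp ((-s)/(4*(1+t)))/(8*Real.pi*(1+t)^2))) t := by
  have hπ := Real.pi_ne_zero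
  have h1 : HasDerivAt (fun u : ℝ => (-s) / (4*(1+u))) (s/(4*(1+t)^2)) t := by
    have h0 : HasDerivAt (fun u : ℝ => 4*(1+u)) 4 t := by
      simpa using ((hasDerivAt_id t).const_add 1).const_mul 4
    have := (h0.inv (by simpa using ht)).const_mul (-s)
    refine this.congr_deriv ?_
    field_simp
  have h2 := ((h1.exp).const_sub 1).div_const (2*Real.pi*s)
  refine h2.congr_deriv ?_
  field_simp
  ring

def Q (x : E2) : ℝ := x 0 * x 0 + x 1 * x 1
lemma normsq (x : E2) : ‖x‖^2 = Q x := by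
  rw [EuclideanSpace.norm_eq, Real.sq_sqrt (by positivity)]
  simp [Q, Fin.sum_univ_two, pow_two]
lemma Q_pos {x : E2} (hx : x ≠ 0) : 0 < Q x := by
  rw [← normsq]; exact pow_pos (norm_pos_iff.mpr hx) 2
lemma Q_ne {x : E2} (hx : x ≠ 0) : Q x ≠ 0 := ne_of_gt (Q_pos hx)

def pr (j : Fin 2) : E2 →L[ℝ] ℝ := EuclideanSpace.proj j
def dQ (x : E2) : E2 →L[ℝ] ℝ := (2 * x 0) • pr 0 + (2 * x 1) • pr 1
lemma dQ_apply (x v : E2) : dQ x v = 2 * x 0 * v 0 + 2 * x 1 * v 1 := by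
  simp [dQ, pr]
lemma e2_apply (j i : Fin 2) : e2 j i = if j = i then 1 else 0 := by
  simp [e2, EuclideanSpace.single_apply, eq_comm]
lemma dQ_e2 (x : E2) (j : Fin 2) : dQ x (e2 j) = 2 * x j := by
  fin_cases j <;> simp [dQ_apply, e2_apply]
lemma hasFDerivAt_Q (x : E2) : HasFDerivAt Q (dQ x) x := by
  have h0 : HasFDerivAt (fun y : E2 => y 0) (pr 0) x := (pr 0).hasFDerivAt
  have h1 : HasFDerivAt (fun y : E2 => y 1) (pr 1) x := (pr 1).hasFDerivAt
  have := (h0.mul h0).add (h1.mul h1)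
  refine this.congr_fderiv ?_
  unfold dQ
  ext v
  simp [pr]
  ring

def Pc : Fin 2 → (E2 →L[ℝ] ℝ) := ![-(pr 1), pr 0]
lemma Pc_apply (i : Fin 2) (y : E2) : Pc i y = perp y i := by
  fin_cases i <;> simp [Pc, pr, perp] <;> rfl
lemma hasFDerivAt_perp (i : Fin 2) (x : E2) :
    HasFDerivAt (fun y : E2 => perp y i) (Pc i) x :=
  (Pc i).hasFDerivAt.congr_of_eventuallyEq
    (Filter.Eventually.of_forall fun y => (Pc_apply i y).symm)

lemma theta_eq {x : E2} (t : ℝ) (hx : x ≠ 0) (i : Fin 2) :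
    theta t x i = perp x i * gg t (Q x) := by
  rw [theta, if_neg hx]
  have : (((1 - Real.exp (-‖x‖ ^ 2 / (4 * (1 + t)))) / (2 * Real.pi * ‖x‖ ^ 2)) • perp x) i
      = ((1 - Real.exp (-‖x‖ ^ 2 / (4 * (1 + t)))) / (2 * Real.pi * ‖x‖ ^ 2)) * perp x i := rfl
  rw [this, normsq, gg, mul_comm]

def Dth (t : ℝ) (i : Fin 2) (x : E2) : E2 →L[ℝ] ℝ :=
  gg t (Q x) • Pc i + (perp x i * gg1 t (Q x)) • dQ x

lemma Dth_e2 (t : ℝ) (i j : Fin 2) (x : E2) :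
    Dth t i x (e2 j) = perp (e2 j) i * gg t (Q x) + perp x i * gg1 t (Q x) * (2 * x j) := by
  simp [Dth, Pc_apply, dQ_e2]
  ring

lemma formula_hasFDerivAt {x : E2} (t : ℝ) (ht : (1:ℝ)+t ≠ 0) (hx : x ≠ 0) (i : Fin 2) :
    HasFDerivAt (fun y : E2 => perp y i * gg t (Q y)) (Dth t i x) x := by
  have h1 := (hasFDerivAt_perp i x).mul
    ((hasDerivAt_gg t (Q x) ht (Q_ne hx)).comp_hasFDerivAt x (hasFDerivAt_Q x))
  refine h1.congr_fderiv ?_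
  unfold Dth
  ext v
  simp [Pc_apply]
  ring

lemma contDiff_cc {χt : E2 → ℝ} (hχ : ContDiff ℝ (⊤ : ℕ∞) χt) (ρ : ℝ) :
    ContDiff ℝ (⊤ : ℕ∞) (fun y : E2 => χt (ρ⁻¹ • y)) :=
  hχ.comp (contDiff_const_smul ρ⁻¹)

lemma contDiff_dcc {χt : E2 → ℝ} (hχ : ContDiff ℝ (⊤ : ℕ∞) χt) (ρ : ℝ) (j : Fin 2) :
    ContDiff ℝ 1 (fun y : E2 => fderiv ℝ (fun z : E2 => χt (ρ⁻¹ • z)) y (e2 j)) :=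
  (((contDiff_cc hχ ρ).fderiv_right ((WithTop.coe_le_coe.mpr le_top))).clm_apply contDiff_const)

lemma uchi_comp (χt : E2 → ℝ) (ρ t : ℝ) (z : E2) (i : Fin 2) :
    uchi χt ρ t z i = χt (ρ⁻¹ • z) * theta t z i := rfl

lemma second_partial {χt : E2 → ℝ} (hχ : ContDiff ℝ (⊤ : ℕ∞) χt) (ρ t : ℝ)
    (ht : (1:ℝ)+t ≠ 0) {x : E2} (hx : x ≠ 0) (i j : Fin 2) :
    fderiv ℝ (fun y => fderiv ℝ (fun z => uchi χt ρ t z i) y (e2 j)) x (e2 j)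
      = fderiv ℝ (fun y => fderiv ℝ (fun z : E2 => χt (ρ⁻¹ • z)) y (e2 j)) x (e2 j)
          * (perp x i * gg t (Q x))
        + 2 * fderiv ℝ (fun z : E2 => χt (ρ⁻¹ • z)) x (e2 j)
          * (perp (e2 j) i * gg t (Q x) + perp x i * gg1 t (Q x) * (2 * x j))
        + χt (ρ⁻¹ • x) * (perp (e2 j) i * gg1 t (Q x) * (2 * x j) * 2
            + perp x i * gg2 t (Q x) * (2 * x j) * (2 * x j)
            + perp x i * gg1 t (Q x) * 2) := by
  have hcd : Differentiable ℝ (fun y : E2 => χt (ρ⁻¹ • y)) :=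
    (contDiff_cc hχ ρ).differentiable (by simp)
  set c : E2 → ℝ := fun y : E2 => χt (ρ⁻¹ • y) with hc
  -- the eventual formula for the first derivative
  have hW : (fun y => fderiv ℝ (fun z => uchi χt ρ t z i) y (e2 j)) =ᶠ[𝓝 x]
      (fun y => c y * (perp (e2 j) i * gg t (Q y) + perp y i * gg1 t (Q y) * (2 * y j))
        + (perp y i * gg t (Q y)) * fderiv ℝ c y (e2 j)) := by
    filter_upwards [(isOpen_compl_singleton).mem_nhds hx] with y hy
    have hB := formula_hasFDerivAt t ht hy i
    have hu := (hcd y).hasFDerivAt.mul hB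
    have hu2 : HasFDerivAt (fun z => uchi χt ρ t z i)
        (c y • Dth t i y + (perp y i * gg t (Q y)) • fderiv ℝ c y) y := by
      apply hu.congr_of_eventuallyEq
      filter_upwards [(isOpen_compl_singleton).mem_nhds hy] with z hz
      rw [uchi_comp, theta_eq t hz i]; rfl
    rw [hu2.fderiv]
    simp [Dth_e2]
  rw [hW.fderiv_eq]
  -- now differentiate the explicit formula
  have hA : HasFDerivAt (fun y : E2 => fderiv ℝ c y (e2 j))
      (fderiv ℝ (fun y : E2 => fderiv ℝ c y (e2 j)) x) x :=
    (((contDiff_dcc hχ ρ j).differentiable (by norm_num)) x).hasFDerivAt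
  have hB := formula_hasFDerivAt t ht hx i
  have hgQ := (hasDerivAt_gg t (Q x) ht (Q_ne hx)).comp_hasFDerivAt x (hasFDerivAt_Q x)
  have hg1Q := (hasDerivAt_gg1 t (Q x) ht (Q_ne hx)).comp_hasFDerivAt x (hasFDerivAt_Q x)
  have hyj : HasFDerivAt (fun y : E2 => 2 * y j) ((2:ℝ) • pr j) x := by
    exact ((pr j).hasFDerivAt.const_mul (2:ℝ))
  have hD : HasFDerivAt
      (fun y : E2 => perp (e2 j) i * gg t (Q y) + perp y i * gg1 t (Q y) * (2 * y j))
      ((perp (e2 j) i • (gg1 t (Q x) • dQ x))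
        + ((perp x i * gg1 t (Q x)) • ((2:ℝ) • pr j)
            + (2 * x j) • (perp x i • (gg2 t (Q x) • dQ x) + gg1 t (Q x) • Pc i))) x := by
    exact (hgQ.const_mul _).add (((hasFDerivAt_perp i x).mul hg1Q).mul hyj)
  have htot := ((hcd x).hasFDerivAt.mul hD).add (hB.mul hA)
  have heq : (fun y => c y * (perp (e2 j) i * gg t (Q y) + perp y i * gg1 t (Q y) * (2 * y j))
        + (perp y i * gg t (Q y)) * fderiv ℝ c y (e2 j))
      = fun y => c y * (perp (e2 j) i * gg t (Q y) + perp y i * gg1 t (Q y) * (2 * y j))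
        + (fun y => perp y i * gg t (Q y)) y * (fun y => fderiv ℝ c y (e2 j)) y := rfl
  rw [heq]; erw [htot.fderiv]
  have hjj : (e2 j) j = 1 := by rw [e2_apply, if_pos rfl]
  simp [Dth_e2, dQ_e2, Pc_apply, pr, hjj]
  ring

lemma time_deriv (χt : E2 → ℝ) (ρ t : ℝ) (ht : (1:ℝ)+t ≠ 0) {x : E2} (hx : x ≠ 0) (i : Fin 2) :
    deriv (fun s => uchi χt ρ s x i) t
      = χt (ρ⁻¹ • x) * perp x i * (-(Real.exp ((-(Q x))/(4*(1+t)))/(8*Real.pi*(1+t)^2))) := by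
  have h1 : (fun s => uchi χt ρ s x i)
      = fun s => (χt (ρ⁻¹ • x) * perp x i) * gg s (Q x) := by
    funext s
    rw [uchi_comp, theta_eq s hx i]
    ring
  rw [h1]
  exact (((hasDerivAt_gg_time t (Q x) ht (Q_ne hx)).const_mul _)).deriv

lemma norm_eq_sqrt_Q (x : E2) : ‖x‖ = Real.sqrt (Q x) := by
  rw [EuclideanSpace.norm_eq]
  congr 1
  simp [Q, Fin.sum_univ_two, pow_two]

lemma radial_fderiv_perp {f : E2 → ℝ} (hf : Differentiable ℝ f)
    (hrad : ∀ x y : E2, ‖x‖ = ‖y‖ → f x = f y) (x : E2) :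
    fderiv ℝ f x (perp x) = 0 := by
  set γ : ℝ → E2 := fun s => Real.cos s • x + Real.sin s • perp x with hγdef
  have hγ0 : γ 0 = x := by simp [hγdef]
  have hQγ : ∀ s, Q (γ s) = Q x := by
    intro s
    have h0 : γ s 0 = Real.cos s * x 0 + Real.sin s * (-(x 1)) := rfl
    have h1 : γ s 1 = Real.cos s * x 1 + Real.sin s * (x 0) := rfl
    simp only [Q, h0, h1]
    have := Real.sin_sq_add_cos_sq s
    nlinarith [this]
  have hconst : ∀ s, f (γ s) = f x := fun s =>
    hrad _ _ (by rw [norm_eq_sqrt_Q, norm_eq_sqrt_Q, hQγ])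
  have hγd : HasDerivAt γ (perp x) 0 := by
    have hc : HasDerivAt (fun s : ℝ => Real.cos s • x) ((-Real.sin 0) • x) 0 :=
      (Real.hasDerivAt_cos 0).smul_const x
    have hs : HasDerivAt (fun s : ℝ => Real.sin s • perp x) ((Real.cos 0) • perp x) 0 :=
      (Real.hasDerivAt_sin 0).smul_const (perp x)
    have := hc.add hs
    exact this.congr_deriv (by simp)
  have hcomp : HasDerivAt (fun s => f (γ s)) (fderiv ℝ f x (perp x)) 0 := by
    have hfd : HasFDerivAt f (fderiv ℝ f x) (γ 0) := hγ0.symm ▸ (hf x).hasFDerivAt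
    exact hfd.comp_hasDerivAt 0 hγd
  have hzero : HasDerivAt (fun s => f (γ s)) 0 0 := by
    have : (fun s => f (γ s)) = fun _ => f x := funext hconst
    rw [this]
    exact hasDerivAt_const 0 _
  exact hcomp.unique hzero

lemma e2_decomp {x : E2} (hx : x ≠ 0) (j : Fin 2) :
    e2 j = (x j / Q x) • x + (perp x j / Q x) • perp x := by
  have hQ := Q_ne hx
  apply PiLp.ext
  intro k
  have : ((x j / Q x) • x + (perp x j / Q x) • perp x) k
      = x j / Q x * x k + perp x j / Q x * perp x k := rfl
  rw [this, e2_apply]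
  fin_cases j <;> fin_cases k <;>
    simp [perp, vec2] <;> field_simp [Q] at * <;> simp only [Q] <;> ring

lemma radial_fderiv {f : E2 → ℝ} (hf : Differentiable ℝ f)
    (hrad : ∀ x y : E2, ‖x‖ = ‖y‖ → f x = f y) {x : E2} (hx : x ≠ 0) (j : Fin 2) :
    fderiv ℝ f x (e2 j) = x j / Q x * fderiv ℝ f x x := by
  rw [e2_decomp hx j]
  rw [map_add, _root_.map_smul, _root_.map_smul, radial_fderiv_perp hf hrad x]
  simp [smul_eq_mul]

lemma Rchi_apply (χt : E2 → ℝ) (ρ t : ℝ) (x : E2) (i : Fin 2) :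
    Rchi χt ρ t x i
      = (∑ j : Fin 2, fderiv ℝ (fun y => fderiv ℝ (fun z => uchi χt ρ t z i) y (e2 j)) x (e2 j))
        - deriv (fun s => uchi χt ρ s x i) t := by
  fin_cases i <;> rfl

set_option maxHeartbeats 2000000 in
lemma Rchi_formula {χt : E2 → ℝ} (hχ : ContDiff ℝ (⊤ : ℕ∞) χt)
    (hrad : ∀ x y : E2, ‖x‖ = ‖y‖ → χt x = χt y) (ρ t : ℝ) (ht : (1:ℝ)+t ≠ 0)
    {x : E2} (hx : x ≠ 0) (i : Fin 2) :
    Rchi χt ρ t x i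
      = theta t x i
          * (∑ j : Fin 2,
              fderiv ℝ (fun y => fderiv ℝ (fun z => χt (ρ⁻¹ • z)) y (e2 j)) x (e2 j))
        + 2 * (fderiv ℝ (fun y => χt (ρ⁻¹ • y)) x x / ‖x‖ ^ 2)
          * (perp x i * Xi t x - theta t x i) := by
  have hcd : Differentiable ℝ (fun y : E2 => χt (ρ⁻¹ • y)) :=
    (contDiff_cc hχ ρ).differentiable (by simp)
  have hradc : ∀ a b : E2, ‖a‖ = ‖b‖ → χt (ρ⁻¹ • a) = χt (ρ⁻¹ • b) := by
    intro a b hab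
    exact hrad _ _ (by rw [norm_smul, norm_smul, hab])
  have hQ := Q_ne hx
  have hh := heat_id t (Q x) ht hQ
  have hr := radial_id t (Q x) ht hQ
  rw [Rchi_apply, Fin.sum_univ_two, Fin.sum_univ_two,
    second_partial hχ ρ t ht hx i 0, second_partial hχ ρ t ht hx i 1,
    time_deriv χt ρ t ht hx i,
    radial_fderiv hcd hradc hx 0, radial_fderiv hcd hradc hx 1,
    theta_eq t hx i, Xi, normsq]
  have hQdef : Q x = x 0 * x 0 + x 1 * x 1 := rfl
  have hπ := Real.pi_ne_zero
  have h0 : ∀ y : E2, perp y 0 = -(y 1) := fun _ => rfl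
  have h1 : ∀ y : E2, perp y 1 = y 0 := fun _ => rfl
  set QQ := Q x with hQQ
  set g := gg t QQ
  set g1 := gg1 t QQ
  set g2 := gg2 t QQ
  set EE := Real.exp (-QQ/(4*(1+t))) with hEE
  set d := fderiv ℝ (fun y => χt (ρ⁻¹ • y)) x x with hd
  set c20 := fderiv ℝ (fun y => fderiv ℝ (fun z => χt (ρ⁻¹ • z)) y (e2 0)) x (e2 0) with hc20
  set c21 := fderiv ℝ (fun y => fderiv ℝ (fun z => χt (ρ⁻¹ • z)) y (e2 1)) x (e2 1) with hc21
  set κ := χt (ρ⁻¹ • x) with hκ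
  fin_cases i
  · simp only [Fin.zero_eta, Fin.mk_one, h0, h1, e2_apply, Fin.isValue, if_pos, if_neg, one_ne_zero, zero_ne_one,
      reduceIte, neg_zero, mul_zero, zero_mul, mul_one, neg_neg, mul_neg, neg_mul]
    linear_combination (norm := (field_simp [hQ, hπ, ht]; ring))
      (2*d*(-(x 1))/QQ) * hr + (κ*(-(x 1))) * hh
      + (-((2*d/QQ)*2*g1*(-(x 1)) + κ*4*g2*(-(x 1)))) * hQdef
  · simp only [Fin.zero_eta, Fin.mk_one, h0, h1, e2_apply, Fin.isValue, if_pos, if_neg, one_ne_zero, zero_ne_one,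
      reduceIte, neg_zero, mul_zero, zero_mul, mul_one, neg_neg, mul_neg, neg_mul]
    linear_combination (norm := (field_simp [hQ, hπ, ht]; ring))
      (2*d*(x 0)/QQ) * hr + (κ*(x 0)) * hh
      + (-((2*d/QQ)*2*g1*(x 0) + κ*4*g2*(x 0))) * hQdef

lemma vec2_zero : vec2 0 0 = (0 : E2) := by
  apply PiLp.ext; intro k; fin_cases k <;> rfl

lemma Rchi_vanish_inner {χt : E2 → ℝ} (ρ t : ℝ) (hρ : 0 < ρ)
    (hχ_zero : ∀ z : E2, ‖z‖ ≤ 1 → χt z = 0) {x : E2} (hx : ‖x‖ < ρ) :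
    Rchi χt ρ t x = 0 := by
  have hU : IsOpen {y : E2 | ‖y‖ < ρ} := isOpen_lt (continuous_norm) continuous_const
  have hcc : ∀ y : E2, ‖y‖ < ρ → ∀ s : ℝ, ∀ i : Fin 2, uchi χt ρ s y i = 0 := by
    intro y hy s i
    rw [uchi_comp, hχ_zero _ (by
      rw [norm_smul]
      have : ‖ρ⁻¹‖ = ρ⁻¹ := by
        rw [Real.norm_eq_abs]; exact abs_of_pos (by positivity)
      rw [this]
      calc ρ⁻¹ * ‖y‖ ≤ ρ⁻¹ * ρ := by
            apply mul_le_mul_of_nonneg_left hy.le (by positivity)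
        _ = 1 := inv_mul_cancel₀ (ne_of_gt hρ))]
    ring
  have hfd : ∀ i j : Fin 2,
      fderiv ℝ (fun y => fderiv ℝ (fun z => uchi χt ρ t z i) y (e2 j)) x (e2 j) = 0 := by
    intro i j
    have hev : (fun y => fderiv ℝ (fun z => uchi χt ρ t z i) y (e2 j)) =ᶠ[𝓝 x]
        (fun _ => (0:ℝ)) := by
      filter_upwards [hU.mem_nhds hx] with y hy
      have : (fun z => uchi χt ρ t z i) =ᶠ[𝓝 y] (fun _ => (0:ℝ)) := by
        filter_upwards [hU.mem_nhds hy] with z hz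
        exact hcc z hz t i
      rw [this.fderiv_eq, fderiv_fun_const]
      rfl
    rw [hev.fderiv_eq, fderiv_fun_const]
    rfl
  have hdt : ∀ i : Fin 2, deriv (fun s => uchi χt ρ s x i) t = 0 := by
    intro i
    have : (fun s => uchi χt ρ s x i) = fun _ => (0:ℝ) := funext fun s => hcc x hx s i
    rw [this, deriv_const]
  rw [Rchi]
  rw [Fin.sum_univ_two, Fin.sum_univ_two, hfd 0 0, hfd 0 1, hfd 1 0, hfd 1 1, hdt 0, hdt 1]
  simpa using vec2_zero

lemma fderiv_cc_eventually_zero {χt : E2 → ℝ} {ρ : ℝ} (hρ : 1 ≤ ρ)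
    (hχ_one : ∀ z : E2, 2 ≤ ‖z‖ → χt z = 1) {x : E2} (hx : 2*ρ < ‖x‖) :
    ∀ᶠ y in 𝓝 x, fderiv ℝ (fun z : E2 => χt (ρ⁻¹ • z)) y = 0 := by
  have hρ0 : 0 < ρ := lt_of_lt_of_le one_pos hρ
  have hV : IsOpen {y : E2 | 2*ρ < ‖y‖} := isOpen_lt continuous_const continuous_norm
  filter_upwards [hV.mem_nhds hx] with y hy
  have hone : (fun z : E2 => χt (ρ⁻¹ • z)) =ᶠ[𝓝 y] (fun _ => (1:ℝ)) := by
    filter_upwards [hV.mem_nhds hy] with z hz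
    apply hχ_one
    rw [norm_smul, Real.norm_eq_abs, abs_of_pos (by positivity)]
    have : ρ⁻¹ * (2*ρ) ≤ ρ⁻¹ * ‖z‖ :=
      mul_le_mul_of_nonneg_left (le_of_lt hz) (by positivity)
    calc (2:ℝ) = ρ⁻¹ * (2*ρ) := by field_simp
      _ ≤ ρ⁻¹ * ‖z‖ := this
  rw [hone.fderiv_eq, fderiv_fun_const]
  rfl

lemma Rchi_vanish_outer {χt : E2 → ℝ} (hχ : ContDiff ℝ (⊤ : ℕ∞) χt)
    (hrad : ∀ x y : E2, ‖x‖ = ‖y‖ → χt x = χt y)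
    (hχ_one : ∀ z : E2, 2 ≤ ‖z‖ → χt z = 1)
    {ρ : ℝ} (hρ : 1 ≤ ρ) (t : ℝ) (ht : (1:ℝ)+t ≠ 0) {x : E2} (hx : 2*ρ < ‖x‖) :
    Rchi χt ρ t x = 0 := by
  have hρ0 : 0 < ρ := lt_of_lt_of_le one_pos hρ
  have hxne : x ≠ 0 := by
    intro h
    rw [h, norm_zero] at hx
    nlinarith
  have hev := fderiv_cc_eventually_zero hρ hχ_one hx
  have hdcx : fderiv ℝ (fun y : E2 => χt (ρ⁻¹ • y)) x x = 0 := by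
    rw [hev.self_of_nhds]
    rfl
  have hc2 : ∀ j : Fin 2,
      fderiv ℝ (fun y => fderiv ℝ (fun z : E2 => χt (ρ⁻¹ • z)) y (e2 j)) x (e2 j) = 0 := by
    intro j
    have hev2 : (fun y => fderiv ℝ (fun z : E2 => χt (ρ⁻¹ • z)) y (e2 j)) =ᶠ[𝓝 x]
        (fun _ => (0:ℝ)) := by
      filter_upwards [hev] with y hy
      rw [hy]
      rfl
    rw [hev2.fderiv_eq, fderiv_fun_const]
    rfl
  apply PiLp.ext
  intro k
  have h0 : (0 : E2) k = 0 := rfl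
  rw [h0, Rchi_formula hχ hrad ρ t ht hxne k, Fin.sum_univ_two, hc2 0, hc2 1, hdcx]
  ring

lemma fderiv_cc_apply {χt : E2 → ℝ} (hχ : ContDiff ℝ (⊤ : ℕ∞) χt) (ρ : ℝ) (y v : E2) :
    fderiv ℝ (fun z : E2 => χt (ρ⁻¹ • z)) y v = ρ⁻¹ * fderiv ℝ χt (ρ⁻¹ • y) v := by
  have hL : HasFDerivAt (fun z : E2 => ρ⁻¹ • z)
      (ρ⁻¹ • ContinuousLinearMap.id ℝ E2) y := by
    exact (hasFDerivAt_id y).const_smul ρ⁻¹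
  have hcomp : HasFDerivAt (fun z : E2 => χt (ρ⁻¹ • z))
      ((fderiv ℝ χt (ρ⁻¹ • y)).comp (ρ⁻¹ • ContinuousLinearMap.id ℝ E2)) y :=
    ((hχ.differentiable (by simp) (ρ⁻¹ • y)).hasFDerivAt).comp y hL
  rw [hcomp.fderiv]
  simp [ContinuousLinearMap.coe_comp', Function.comp, _root_.map_smul, smul_eq_mul]

lemma contDiff_G {χt : E2 → ℝ} (hχ : ContDiff ℝ (⊤ : ℕ∞) χt) (j : Fin 2) :
    ContDiff ℝ (⊤ : ℕ∞) (fun y : E2 => fderiv ℝ χt y (e2 j)) :=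
  (hχ.fderiv_right (by simp)).clm_apply contDiff_const

lemma c2_scale {χt : E2 → ℝ} (hχ : ContDiff ℝ (⊤ : ℕ∞) χt) (ρ : ℝ) (x : E2) (j : Fin 2) :
    fderiv ℝ (fun y => fderiv ℝ (fun z : E2 => χt (ρ⁻¹ • z)) y (e2 j)) x (e2 j)
      = ρ⁻¹ * (ρ⁻¹ * fderiv ℝ (fun y => fderiv ℝ χt y (e2 j)) (ρ⁻¹ • x) (e2 j)) := by
  have hG := contDiff_G hχ j
  have hfun : (fun y => fderiv ℝ (fun z : E2 => χt (ρ⁻¹ • z)) y (e2 j))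
      = fun y => ρ⁻¹ * (fun w : E2 => fderiv ℝ χt w (e2 j)) (ρ⁻¹ • y) :=
    funext fun y => fderiv_cc_apply hχ ρ y (e2 j)
  rw [hfun]
  have hL : HasFDerivAt (fun z : E2 => ρ⁻¹ • z)
      (ρ⁻¹ • ContinuousLinearMap.id ℝ E2) x := by
    exact (hasFDerivAt_id x).const_smul ρ⁻¹
  have hGL : HasFDerivAt (fun y : E2 => (fun w : E2 => fderiv ℝ χt w (e2 j)) (ρ⁻¹ • y))
      ((fderiv ℝ (fun w : E2 => fderiv ℝ χt w (e2 j)) (ρ⁻¹ • x)).comp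
        (ρ⁻¹ • ContinuousLinearMap.id ℝ E2)) x :=
    ((hG.differentiable (by simp) (ρ⁻¹ • x)).hasFDerivAt).comp x hL
  rw [fderiv_const_mul hGL.differentiableAt, hGL.fderiv]
  simp [ContinuousLinearMap.coe_comp', Function.comp, _root_.map_smul, smul_eq_mul]

lemma fderiv_chi_zero_of_norm_gt {χt : E2 → ℝ}
    (hχ_one : ∀ z : E2, 2 ≤ ‖z‖ → χt z = 1) {z : E2} (hz : 2 < ‖z‖) :
    fderiv ℝ χt z = 0 := by
  have hV : IsOpen {y : E2 | 2 < ‖y‖} := isOpen_lt continuous_const continuous_norm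
  have hone : χt =ᶠ[𝓝 z] (fun _ => (1:ℝ)) := by
    filter_upwards [hV.mem_nhds hz] with w hw
    exact hχ_one w (le_of_lt hw)
  rw [hone.fderiv_eq, fderiv_fun_const]
  rfl

lemma exists_M1 {χt : E2 → ℝ} (hχ : ContDiff ℝ (⊤ : ℕ∞) χt)
    (hχ_one : ∀ z : E2, 2 ≤ ‖z‖ → χt z = 1) :
    ∃ M1 : ℝ, 0 ≤ M1 ∧ ∀ z : E2, ‖fderiv ℝ χt z‖ ≤ M1 := by
  have hcont : Continuous (fderiv ℝ χt) := (hχ.fderiv_right (m := (⊤ : ℕ∞)) (by simp)).continuous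
  have hsupp : HasCompactSupport (fderiv ℝ χt) := by
    apply HasCompactSupport.intro (isCompact_closedBall (0:E2) 2)
    intro z hz
    apply fderiv_chi_zero_of_norm_gt hχ_one
    simpa [Metric.mem_closedBall, dist_zero_right, not_le] using hz
  obtain ⟨C, hC⟩ := hsupp.exists_bound_of_continuous hcont
  exact ⟨max C 0, le_max_right _ _, fun z => le_trans (hC z) (le_max_left _ _)⟩

lemma exists_M2 {χt : E2 → ℝ} (hχ : ContDiff ℝ (⊤ : ℕ∞) χt)
    (hχ_one : ∀ z : E2, 2 ≤ ‖z‖ → χt z = 1) (j : Fin 2) :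
    ∃ M2 : ℝ, 0 ≤ M2 ∧ ∀ z : E2,
      |fderiv ℝ (fun y => fderiv ℝ χt y (e2 j)) z (e2 j)| ≤ M2 := by
  have hG := contDiff_G hχ j
  have hcont : Continuous (fun z : E2 => fderiv ℝ (fun y => fderiv ℝ χt y (e2 j)) z (e2 j)) :=
    (((hG.fderiv_right (m := (⊤ : ℕ∞)) (by simp)).clm_apply contDiff_const).continuous)
  have hsupp : HasCompactSupport
      (fun z : E2 => fderiv ℝ (fun y => fderiv ℝ χt y (e2 j)) z (e2 j)) := by
    apply HasCompactSupport.intro (isCompact_closedBall (0:E2) 2)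
    intro z hz
    have hz2 : 2 < ‖z‖ := by
      simpa [Metric.mem_closedBall, dist_zero_right, not_le] using hz
    have hV : IsOpen {y : E2 | 2 < ‖y‖} := isOpen_lt continuous_const continuous_norm
    have hev : (fun y : E2 => fderiv ℝ χt y (e2 j)) =ᶠ[𝓝 z] (fun _ => (0:ℝ)) := by
      filter_upwards [hV.mem_nhds hz2] with w hw
      rw [fderiv_chi_zero_of_norm_gt hχ_one hw]
      rfl
    rw [hev.fderiv_eq, fderiv_fun_const]
    rfl
  obtain ⟨C, hC⟩ := hsupp.exists_bound_of_continuous hcont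
  refine ⟨max C 0, le_max_right _ _, fun z => ?_⟩
  exact le_trans (by simpa using hC z) (le_max_left _ _)

lemma abs_coord_le (x : E2) (i : Fin 2) : |x i| ≤ ‖x‖ := by
  rw [norm_eq_sqrt_Q, ← Real.sqrt_sq_eq_abs]
  apply Real.sqrt_le_sqrt
  fin_cases i
  · show x 0 ^ 2 ≤ Q x
    rw [pow_two]; unfold Q; nlinarith [mul_self_nonneg (x 1)]
  · show x 1 ^ 2 ≤ Q x
    rw [pow_two]; unfold Q; nlinarith [mul_self_nonneg (x 0)]

lemma abs_perp_coord_le (x : E2) (i : Fin 2) : |perp x i| ≤ ‖x‖ := by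
  fin_cases i
  · show |(-(x 1))| ≤ ‖x‖
    rw [abs_neg]; exact abs_coord_le x 1
  · exact abs_coord_le x 0

lemma norm_vec2_le (a b : ℝ) : ‖vec2 a b‖ ≤ |a| + |b| := by
  rw [norm_eq_sqrt_Q]
  have h : Q (vec2 a b) = a*a + b*b := rfl
  rw [h, ← Real.sqrt_sq (by positivity : (0:ℝ) ≤ |a| + |b|)]
  apply Real.sqrt_le_sqrt
  have := abs_nonneg a; have := abs_nonneg b
  nlinarith [abs_mul_abs_self a, abs_mul_abs_self b, mul_nonneg (abs_nonneg a) (abs_nonneg b)]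

lemma one_sub_exp_le (u : ℝ) (hu : 0 ≤ u) : 1 - Real.exp (-u) ≤ u := by
  nlinarith [Real.add_one_le_exp (-u)]

lemma exp_neg_le_one (u : ℝ) (hu : 0 ≤ u) : Real.exp (-u) ≤ 1 := by
  rw [Real.exp_le_one_iff]; linarith

lemma theta_abs_le (t : ℝ) (ht : 0 ≤ t) (x : E2) (i : Fin 2) :
    |theta t x i| ≤ ‖x‖ / (8 * Real.pi * (1 + t)) := by
  have hπ := Real.pi_pos
  have hτ : (0:ℝ) < 1 + t := by linarith
  by_cases hx : x = 0
  · rw [hx, theta, if_pos rfl]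
    simp
  · rw [theta_eq t hx i]
    have hQ := Q_pos hx
    have harg : (-(Q x))/(4*(1+t)) = -(Q x/(4*(1+t))) := by ring
    have hE1 : Real.exp ((-(Q x))/(4*(1+t))) ≤ 1 := by
      rw [harg]; exact exp_neg_le_one _ (by positivity)
    have hE2 : 1 - Real.exp ((-(Q x))/(4*(1+t))) ≤ Q x/(4*(1+t)) := by
      rw [harg]; exact one_sub_exp_le _ (by positivity)
    have hgnn : 0 ≤ gg t (Q x) := by
      unfold gg
      apply div_nonneg (by linarith) (by positivity)
    have hgle : gg t (Q x) ≤ 1 / (8 * Real.pi * (1+t)) := by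
      unfold gg
      rw [div_le_div_iff₀ (by positivity) (by positivity)]
      calc (1 - Real.exp (-(Q x)/(4*(1+t)))) * (8*Real.pi*(1+t))
          ≤ (Q x/(4*(1+t))) * (8*Real.pi*(1+t)) := by
            apply mul_le_mul_of_nonneg_right _ (by positivity)
            exact hE2
        _ = 1 * (2*Real.pi*Q x) := by field_simp; ring
    rw [abs_mul]
    calc |perp x i| * |gg t (Q x)| ≤ ‖x‖ * (1/(8*Real.pi*(1+t))) := by
          apply mul_le_mul (abs_perp_coord_le x i) _ (abs_nonneg _) (norm_nonneg x)
          rw [abs_of_nonneg hgnn]; exact hgle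
      _ = ‖x‖ / (8*Real.pi*(1+t)) := by ring

lemma Xi_abs_le (t : ℝ) (ht : 0 ≤ t) (x : E2) :
    |Xi t x| ≤ 1 / (4 * Real.pi * (1 + t)) := by
  have hπ := Real.pi_pos
  have hτ : (0:ℝ) < 1 + t := by linarith
  unfold Xi
  rw [abs_mul]
  have h1 : |1 / (4*Real.pi*(1+t))| = 1/(4*Real.pi*(1+t)) := abs_of_pos (by positivity)
  rw [h1]
  have hE : |Real.exp (-(‖x‖^2)/(4*(1+t)))| ≤ 1 := by
    rw [abs_of_pos (Real.exp_pos _)]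
    have : -(‖x‖^2)/(4*(1+t)) = -(‖x‖^2/(4*(1+t))) := by ring
    rw [this]; exact exp_neg_le_one _ (by positivity)
  calc 1/(4*Real.pi*(1+t)) * |Real.exp (-(‖x‖^2)/(4*(1+t)))|
      ≤ 1/(4*Real.pi*(1+t)) * 1 := by
        apply mul_le_mul_of_nonneg_left hE (by positivity)
    _ = 1/(4*Real.pi*(1+t)) := by ring

lemma norm_Rchi_le (χt : E2 → ℝ) (ρ t : ℝ) (x : E2) :
    ‖Rchi χt ρ t x‖ ≤ |Rchi χt ρ t x 0| + |Rchi χt ρ t x 1| := by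
  unfold Rchi
  exact norm_vec2_le _ _

lemma Rchi_global_bound {χt : E2 → ℝ} (hχ : ContDiff ℝ (⊤ : ℕ∞) χt)
    (hrad : ∀ x y : E2, ‖x‖ = ‖y‖ → χt x = χt y)
    (hχ_zero : ∀ z : E2, ‖z‖ ≤ 1 → χt z = 0)
    (hχ_one : ∀ z : E2, 2 ≤ ‖z‖ → χt z = 1) :
    ∃ C : ℝ, 0 < C ∧ ∀ ρ : ℝ, 1 ≤ ρ → ∀ t : ℝ, 0 ≤ t → ∀ x : E2,
      ‖Rchi χt ρ t x‖ ≤ C / (ρ * (1 + t)) := by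
  obtain ⟨M1, hM1nn, hM1⟩ := exists_M1 hχ hχ_one
  obtain ⟨M20, hM20nn, hM20⟩ := exists_M2 hχ hχ_one 0
  obtain ⟨M21, hM21nn, hM21⟩ := exists_M2 hχ hχ_one 1
  set M2 : ℝ := M20 + M21 with hM2def
  have hM2nn : 0 ≤ M2 := by positivity
  have hπ := Real.pi_pos
  have hπ3 := Real.pi_gt_three
  refine ⟨M2 + 2*M1 + 1, by positivity, ?_⟩
  intro ρ hρ t ht x
  have hρ0 : (0:ℝ) < ρ := lt_of_lt_of_le one_pos hρ
  have hτ : (0:ℝ) < 1 + t := by linarith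
  have hCpos : (0:ℝ) < (M2 + 2*M1 + 1) / (ρ * (1+t)) := by positivity
  rcases lt_or_ge ‖x‖ ρ with hlt | hge
  · rw [Rchi_vanish_inner ρ t hρ0 hχ_zero hlt, norm_zero]
    exact le_of_lt hCpos
  rcases lt_or_ge (2*ρ) ‖x‖ with hgt | hle
  · rw [Rchi_vanish_outer hχ hrad hχ_one hρ t (ne_of_gt hτ) hgt, norm_zero]
    exact le_of_lt hCpos
  -- annulus case
  have hxne : x ≠ 0 := by
    intro h
    rw [h, norm_zero] at hge
    linarith
  have hr0 : (0:ℝ) < ‖x‖ := norm_pos_iff.mpr hxne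
  set KK : ℝ := M2/(4*Real.pi) + 3*M1/Real.pi with hKK
  -- bounds on the chi derivatives
  have hS : |∑ j : Fin 2, fderiv ℝ (fun y => fderiv ℝ (fun z : E2 => χt (ρ⁻¹ • z)) y (e2 j)) x (e2 j)|
      ≤ M2/ρ^2 := by
    rw [Fin.sum_univ_two, c2_scale hχ ρ x 0, c2_scale hχ ρ x 1]
    have habs : |ρ⁻¹| = ρ⁻¹ := abs_of_pos (by positivity)
    calc |ρ⁻¹ * (ρ⁻¹ * fderiv ℝ (fun y => fderiv ℝ χt y (e2 0)) (ρ⁻¹ • x) (e2 0))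
          + ρ⁻¹ * (ρ⁻¹ * fderiv ℝ (fun y => fderiv ℝ χt y (e2 1)) (ρ⁻¹ • x) (e2 1))|
        ≤ |ρ⁻¹ * (ρ⁻¹ * fderiv ℝ (fun y => fderiv ℝ χt y (e2 0)) (ρ⁻¹ • x) (e2 0))|
          + |ρ⁻¹ * (ρ⁻¹ * fderiv ℝ (fun y => fderiv ℝ χt y (e2 1)) (ρ⁻¹ • x) (e2 1))| :=
          abs_add_le _ _
      _ ≤ ρ⁻¹ * (ρ⁻¹ * M20) + ρ⁻¹ * (ρ⁻¹ * M21) := by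
          rw [abs_mul, abs_mul, abs_mul, abs_mul, habs]
          gcongr
          · exact hM20 _
          · exact hM21 _
      _ = M2/ρ^2 := by rw [hM2def, div_eq_mul_inv, pow_two, mul_inv]; ring
  have hdcx : |fderiv ℝ (fun y : E2 => χt (ρ⁻¹ • y)) x x| ≤ 2*M1 := by
    rw [fderiv_cc_apply hχ ρ x x, abs_mul, abs_of_pos (by positivity : (0:ℝ) < ρ⁻¹)]
    have h1 : |fderiv ℝ χt (ρ⁻¹ • x) x| ≤ M1 * ‖x‖ := by
      calc |fderiv ℝ χt (ρ⁻¹ • x) x| = ‖fderiv ℝ χt (ρ⁻¹ • x) x‖ := rfl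
        _ ≤ ‖fderiv ℝ χt (ρ⁻¹ • x)‖ * ‖x‖ := ContinuousLinearMap.le_opNorm _ _
        _ ≤ M1 * ‖x‖ := by gcongr; exact hM1 _
    calc ρ⁻¹ * |fderiv ℝ χt (ρ⁻¹ • x) x| ≤ ρ⁻¹ * (M1 * (2*ρ)) := by
          apply mul_le_mul_of_nonneg_left _ (by positivity)
          calc |fderiv ℝ χt (ρ⁻¹ • x) x| ≤ M1 * ‖x‖ := h1
            _ ≤ M1 * (2*ρ) := by gcongr
      _ = 2*M1 := by field_simp
  -- componentwise bound
  have key : ∀ i : Fin 2, |Rchi χt ρ t x i| ≤ KK / (ρ * (1+t)) := by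
    intro i
    rw [Rchi_formula hχ hrad ρ t (ne_of_gt hτ) hxne i]
    have hθ : |theta t x i| ≤ 2*ρ/(8*Real.pi*(1+t)) := by
      calc |theta t x i| ≤ ‖x‖/(8*Real.pi*(1+t)) := theta_abs_le t ht x i
        _ ≤ 2*ρ/(8*Real.pi*(1+t)) := by gcongr
    have hXi := Xi_abs_le t ht x
    have hP : |perp x i| ≤ 2*ρ := le_trans (abs_perp_coord_le x i) hle
    have hA : |perp x i * Xi t x - theta t x i| ≤ (3/(4*Real.pi*(1+t)))*ρ := by
      calc |perp x i * Xi t x - theta t x i|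
          ≤ |perp x i * Xi t x| + |theta t x i| := abs_sub _ _
        _ ≤ (2*ρ) * (1/(4*Real.pi*(1+t))) + 2*ρ/(8*Real.pi*(1+t)) := by
            rw [abs_mul]
            gcongr
        _ = (3/(4*Real.pi*(1+t)))*ρ := by field_simp; ring
    have hdiv : |fderiv ℝ (fun y : E2 => χt (ρ⁻¹ • y)) x x / ‖x‖^2| ≤ (2*M1)/ρ^2 := by
      rw [abs_div, abs_of_pos (by positivity : (0:ℝ) < ‖x‖^2)]
      refine div_le_div₀ (by positivity) hdcx (by positivity) ?_
      gcongr
    calc |theta t x i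
            * (∑ j : Fin 2, fderiv ℝ (fun y => fderiv ℝ (fun z : E2 => χt (ρ⁻¹ • z)) y (e2 j)) x (e2 j))
          + 2 * (fderiv ℝ (fun y : E2 => χt (ρ⁻¹ • y)) x x / ‖x‖^2)
            * (perp x i * Xi t x - theta t x i)|
        ≤ |theta t x i
            * (∑ j : Fin 2, fderiv ℝ (fun y => fderiv ℝ (fun z : E2 => χt (ρ⁻¹ • z)) y (e2 j)) x (e2 j))|
          + |2 * (fderiv ℝ (fun y : E2 => χt (ρ⁻¹ • y)) x x / ‖x‖^2)
            * (perp x i * Xi t x - theta t x i)| := abs_add_le _ _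
      _ ≤ (2*ρ/(8*Real.pi*(1+t))) * (M2/ρ^2)
          + 2 * ((2*M1)/ρ^2) * ((3/(4*Real.pi*(1+t)))*ρ) := by
          rw [abs_mul, abs_mul, abs_mul]
          have h2 : |(2:ℝ)| = 2 := by norm_num
          rw [h2]
          have g1 : |theta t x i| * |∑ j : Fin 2, fderiv ℝ (fun y => fderiv ℝ (fun z : E2 => χt (ρ⁻¹ • z)) y (e2 j)) x (e2 j)|
              ≤ (2*ρ/(8*Real.pi*(1+t))) * (M2/ρ^2) :=
            mul_le_mul hθ hS (abs_nonneg _) (by positivity)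
          have g2 : 2 * |fderiv ℝ (fun y : E2 => χt (ρ⁻¹ • y)) x x / ‖x‖^2|
                * |perp x i * Xi t x - theta t x i|
              ≤ 2 * ((2*M1)/ρ^2) * ((3/(4*Real.pi*(1+t)))*ρ) := by
            apply mul_le_mul _ hA (abs_nonneg _) (by positivity)
            apply mul_le_mul_of_nonneg_left hdiv (by norm_num)
          linarith
      _ = KK / (ρ * (1+t)) := by
          rw [hKK]
          field_simp
          ring
  -- assemble
  have h2KK : 2*KK ≤ M2 + 2*M1 + 1 := by
    have ha2 : M2/(4*Real.pi) ≤ M2/2 := by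
      apply div_le_div_of_nonneg_left hM2nn (by norm_num) (by nlinarith)
    have hb : 3*M1/Real.pi ≤ M1 := by
      rw [div_le_iff₀ hπ]; nlinarith
    rw [hKK]
    linarith
  calc ‖Rchi χt ρ t x‖ ≤ |Rchi χt ρ t x 0| + |Rchi χt ρ t x 1| := norm_Rchi_le χt ρ t x
    _ ≤ KK/(ρ*(1+t)) + KK/(ρ*(1+t)) := add_le_add (key 0) (key 1)
    _ = (2*KK)/(ρ*(1+t)) := by ring
    _ ≤ (M2 + 2*M1 + 1)/(ρ*(1+t)) := by gcongr

theorem truncated_oseen_remainder_formula_and_bound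
    (χt : E2 → ℝ) (hχ_smooth : ContDiff ℝ (⊤ : ℕ∞) χt)
    (hχ_radial : ∀ x y : E2, ‖x‖ = ‖y‖ → χt x = χt y)
    (hχ_zero : ∀ x : E2, ‖x‖ ≤ 1 → χt x = 0)
    (hχ_one : ∀ x : E2, 2 ≤ ‖x‖ → χt x = 1)
    (hχ_range : ∀ x : E2, χt x ∈ Set.Icc (0 : ℝ) 1) :
    (∀ ρ : ℝ, 1 ≤ ρ → ∀ t : ℝ, 0 ≤ t →
      (∀ x : E2, x ≠ 0 → ∀ i : Fin 2,
        Rchi χt ρ t x i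
          = theta t x i
              * (∑ j : Fin 2,
                  fderiv ℝ (fun y => fderiv ℝ (fun z => χt (ρ⁻¹ • z)) y (e2 j)) x (e2 j))
            + 2 * (fderiv ℝ (fun y => χt (ρ⁻¹ • y)) x x / ‖x‖ ^ 2)
              * (perp x i * Xi t x - theta t x i)) ∧
      (∀ x : E2, ‖x‖ < ρ ∨ 2 * ρ < ‖x‖ → Rchi χt ρ t x = 0)) ∧
    (∃ C : ℝ, 0 < C ∧ ∀ ρ : ℝ, 1 ≤ ρ → ∀ t : ℝ, 0 ≤ t → ∀ x : E2,
      ‖Rchi χt ρ t x‖ ≤ C / (ρ * (1 + t))) := by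
  constructor
  · intro ρ hρ t ht
    have ht' : (1:ℝ) + t ≠ 0 := by positivity
    constructor
    · intro x hx i
      exact Rchi_formula hχ_smooth hχ_radial ρ t ht' hx i
    · intro x hx
      rcases hx with h | h
      · exact Rchi_vanish_inner ρ t (lt_of_lt_of_le one_pos hρ) hχ_zero h
      · exact Rchi_vanish_outer hχ_smooth hχ_radial hχ_one hρ t ht' h
  · exact Rchi_global_bound hχ_smooth hχ_radial hχ_zero hχ_one
end
end
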